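/- Let φ : C ⊗ A → K be a rational pairing of a K-coalgebra C with a K-algebra A, and suppose the rational submodule R_φ(A) of the left regular A-module is dense in A (with respect to the topology induced from the finite topology on C^* via A → C^*). Then for every left A-module N, the quotient N / R_φ(N) has zero rational submodule: R_φ(N / R_φ(N)) = 0. -/

import Mathlib

open TensorProduct

universe u

noncomputable section

namespace Formal

variable {K : Type u} [Field K] {C : Type u} [AddCommGroup C] [Module K C] [Coalgebra K C]
variable {A : Type u} [Ring A] [Algebra K A]

/-- The map `a ↦ φ(- ⊗ a) : C →ₗ[K] K` induced by a pairing `φ : C ⊗ A → K`. -/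
def pairMap (φ : C ⊗[K] A →ₗ[K] K) (a : A) : C →ₗ[K] K :=
  φ ∘ₗ (TensorProduct.mk K C A).flip a

/-- The map `δ_V : V ⊗ C → Hom_K(A, V)` of a pairing, as a bare function. -/
def deltaFun (φ : C ⊗[K] A →ₗ[K] K) (V : Type u) [AddCommGroup V] [Module K V] :
    V ⊗[K] C → A → V :=
  fun x a => (TensorProduct.rid K V) (LinearMap.lTensor V (pairMap φ a) x)

/-- The convolution product on `C^* = Hom_K(C, K)`. -/
def conv (f g : C →ₗ[K] K) : C →ₗ[K] K :=
  LinearMap.mul' K K ∘ₗ TensorProduct.map f g ∘ₗ Coalgebra.comul (R := K) (A := C)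

/-- `φ` is a rational pairing: all `δ_V` are injective and `a ↦ φ(- ⊗ a)` is an algebra map
to the convolution algebra `C^*`. -/
def IsRationalPairing (φ : C ⊗[K] A →ₗ[K] K) : Prop :=
  (∀ (V : Type u) (_ : AddCommGroup V) (_ : Module K V), Function.Injective (deltaFun φ V)) ∧
  pairMap φ 1 = Coalgebra.counit (R := K) (A := C) ∧
  (∀ a b : A, pairMap φ (a * b) = conv (pairMap φ a) (pairMap φ b))

/-- The finite topology on the dual `C^*` (pointwise convergence, `K` discrete). -/
def fintopDual : TopologicalSpace (C →ₗ[K] K) :=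
  TopologicalSpace.induced (fun f => (f : C → K))
    (@Pi.topologicalSpace C (fun _ => K) (fun _ => ⊥))

/-- The linear topology on `A` induced from the finite topology on `C^*` via the pairing. -/
def topA (φ : C ⊗[K] A →ₗ[K] K) : TopologicalSpace A :=
  TopologicalSpace.induced (pairMap φ) fintopDual

/-- A left ideal of `A` is closed and cofinite (for the topology induced by `φ`). -/
def ClosedCofinite (φ : C ⊗[K] A →ₗ[K] K) (I : Submodule A A) : Prop :=
  @IsClosed A (topA φ) (I : Set A) ∧
    FiniteDimensional K (A ⧸ I.restrictScalars K)

/-- The annihilator of an element of a left `A`-module. -/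
def ann (N : Type u) [AddCommGroup N] [Module A N] (n : N) : Submodule A A :=
  LinearMap.ker (LinearMap.toSpanSingleton A N n)

/-- An element of a left `A`-module is rational when its annihilator is a closed cofinite
left ideal. -/
def RatElem (φ : C ⊗[K] A →ₗ[K] K) (N : Type u) [AddCommGroup N] [Module A N] (n : N) :
    Prop :=
  ClosedCofinite φ (ann N n)

end Formal
end

namespace Formal

set_option linter.unusedSectionVars false

noncomputable section Aux

variable {K : Type u} [Field K] {C : Type u} [AddCommGroup C] [Module K C] [Coalgebra K C]
variable {A : Type u} [Ring A] [Algebra K A]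

lemma topA_eq (φ : C ⊗[K] A →ₗ[K] K) :
    topA φ = TopologicalSpace.induced (fun (a : A) (c : C) => φ (c ⊗ₜ a))
      (@Pi.topologicalSpace C (fun _ => K) (fun _ => ⊥)) := by
  unfold topA fintopDual
  rw [induced_compose]
  rfl

/-- The basic open `K`-subspace `U_S` of the topology on `A`. -/
def Usub (φ : C ⊗[K] A →ₗ[K] K) (S : Finset C) : Submodule K A :=
  ⨅ c ∈ S, LinearMap.ker (φ ∘ₗ (TensorProduct.mk K C A c))

lemma mem_Usub {φ : C ⊗[K] A →ₗ[K] K} {S : Finset C} {a : A} :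
    a ∈ Usub φ S ↔ ∀ c ∈ S, φ (c ⊗ₜ a) = 0 := by
  simp [Usub]

lemma Usub_antitone (φ : C ⊗[K] A →ₗ[K] K) {S T : Finset C} (h : S ⊆ T) :
    Usub φ T ≤ Usub φ S := fun a ha =>
  mem_Usub.2 fun c hc => mem_Usub.1 ha c (h hc)

/-- Sets defined by finitely many "agreement" conditions are open for `topA φ`. -/
lemma isOpen_agree (φ : C ⊗[K] A →ₗ[K] K) (S : Finset C) (g : C → K) :
    @IsOpen A (topA φ) {a : A | ∀ c ∈ S, φ (c ⊗ₜ a) = g c} := by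
  letI : TopologicalSpace K := ⊥
  letI : TopologicalSpace A := topA φ
  haveI : DiscreteTopology K := discreteTopology_bot K
  have hc : Continuous (fun (a : A) (c : C) => φ (c ⊗ₜ a)) := by
    rw [continuous_iff_le_induced]
    exact (topA_eq φ).le
  have hset : {a : A | ∀ c ∈ S, φ (c ⊗ₜ a) = g c}
      = (fun (a : A) (c : C) => φ (c ⊗ₜ a)) ⁻¹' (Set.pi ↑S fun c => {g c}) := by
    ext a
    simp [Set.mem_pi]
  rw [hset]
  exact (isOpen_set_pi S.finite_toSet fun c _ => isOpen_discrete _).preimage hc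

/-- A left ideal containing a basic open subspace is closed. -/
lemma isClosed_of_Usub_le (φ : C ⊗[K] A →ₗ[K] K) (S : Finset C) (J : Submodule A A)
    (h : ∀ a : A, a ∈ Usub φ S → a ∈ J) : @IsClosed A (topA φ) (J : Set A) := by
  letI : TopologicalSpace A := topA φ
  rw [← isOpen_compl_iff]
  have hset : (↑J : Set A)ᶜ =
      ⋃ a ∈ (↑J : Set A)ᶜ, {b : A | ∀ c ∈ S, φ (c ⊗ₜ b) = φ (c ⊗ₜ a)} := by
    ext b
    constructor
    · intro hb
      exact Set.mem_biUnion hb (fun c _ => rfl)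
    · rintro hb hbJ
      simp only [Set.mem_iUnion] at hb
      obtain ⟨a, haJ, hab⟩ := hb
      refine haJ ?_
      have hsub : a - b ∈ Usub φ S := mem_Usub.2 fun c hc => by
        rw [tmul_sub, map_sub, hab c hc, sub_self]
      have : a - b ∈ J := h _ hsub
      simpa using J.add_mem this hbJ
  rw [hset]
  exact isOpen_biUnion fun a _ => isOpen_agree φ S _

/-- Every closed cofinite left ideal contains a basic open subspace. -/
lemma exists_Usub_le (φ : C ⊗[K] A →ₗ[K] K) (I : Submodule A A)
    (hI : ClosedCofinite φ I) : ∃ S : Finset C, ∀ a : A, a ∈ Usub φ S → a ∈ I := by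
  classical
  haveI : FiniteDimensional K (A ⧸ I.restrictScalars K) := hI.2
  set q : A →ₗ[K] A ⧸ I.restrictScalars K := (I.restrictScalars K).mkQ with hq
  obtain ⟨M, hMmem, hMmin⟩ := IsArtinian.set_has_minimal
    (Set.range fun S : Finset C => (Usub φ S).map q) ⟨_, ⟨(∅ : Finset C), rfl⟩⟩
  obtain ⟨S0, rfl⟩ := hMmem
  refine ⟨S0, fun a ha => ?_⟩
  have key : ∀ T : Finset C, ∃ a', a' ∈ Usub φ (S0 ∪ T) ∧ q a' = q a := by
    intro T
    have hle : (Usub φ (S0 ∪ T)).map q ≤ (Usub φ S0).map q :=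
      Submodule.map_mono (Usub_antitone φ (Finset.subset_union_left))
    have heq : (Usub φ (S0 ∪ T)).map q = (Usub φ S0).map q := by
      by_contra hne
      exact hMmin _ ⟨S0 ∪ T, rfl⟩ (lt_of_le_of_ne hle hne)
    have hmem : q a ∈ (Usub φ (S0 ∪ T)).map q := heq ▸ ⟨a, ha, rfl⟩
    obtain ⟨a', ha', hqa⟩ := hmem
    exact ⟨a', ha', hqa⟩
  -- `a` lies in the closure of `I`:
  letI : TopologicalSpace K := ⊥
  haveI : DiscreteTopology K := discreteTopology_bot K
  have hcl : a ∈ @closure A (topA φ) (I : Set A) := by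
    rw [topA_eq φ, closure_induced]
    rw [mem_closure_iff]
    intro o ho hmem
    rw [isOpen_pi_iff] at ho
    obtain ⟨T, u, hu, hsub⟩ := ho _ hmem
    obtain ⟨a', ha', hqa⟩ := key T
    refine ⟨(fun c : C => φ (c ⊗ₜ (a - a'))), hsub ?_, ⟨a - a', ?_, rfl⟩⟩
    · intro c hc
      have h0 : φ (c ⊗ₜ a') = 0 := mem_Usub.1 ha' c (Finset.mem_union_right _ hc)
      have : φ (c ⊗ₜ (a - a')) = φ (c ⊗ₜ a) := by
        rw [tmul_sub, map_sub, h0, sub_zero]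
      show φ (c ⊗ₜ (a - a')) ∈ u c
      rw [this]
      exact (hu c hc).2
    · have : a - a' ∈ I.restrictScalars K := by
        rw [← Submodule.Quotient.mk_eq_zero]
        have : q (a - a') = 0 := by rw [map_sub, hqa, sub_self]
        exact this
      exact this
  letI : TopologicalSpace A := topA φ
  exact hI.1.closure_subset hcl

/-- Cofiniteness passes to larger ideals. -/
lemma cofinite_mono {I J : Submodule A A} (hIJ : I ≤ J)
    (h : FiniteDimensional K (A ⧸ I.restrictScalars K)) :
    FiniteDimensional K (A ⧸ J.restrictScalars K) := by
  haveI := h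
  have hsurj : Function.Surjective
      (Submodule.mapQ (I.restrictScalars K) (J.restrictScalars K) LinearMap.id
        (fun x hx => hIJ hx)) := by
    intro x
    obtain ⟨y, rfl⟩ := (J.restrictScalars K).mkQ_surjective x
    exact ⟨(I.restrictScalars K).mkQ y, by simp [Submodule.mapQ_apply]; rfl⟩
  exact Module.Finite.of_surjective _ hsurj

/-- KEY FACT: any left ideal containing a closed cofinite one is closed cofinite. -/
lemma closedCofinite_mono (φ : C ⊗[K] A →ₗ[K] K) {I J : Submodule A A}
    (hI : ClosedCofinite φ I) (hIJ : I ≤ J) : ClosedCofinite φ J := by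
  obtain ⟨S, hS⟩ := exists_Usub_le φ I hI
  exact ⟨isClosed_of_Usub_le φ S J (fun a ha => hIJ (hS a ha)), cofinite_mono hIJ hI.2⟩

end Aux

/-- for a rational pairing `φ : C ⊗ A → K` with `R_φ(A)` dense in `A`, every
left `A`-module `N` satisfies `R_φ(N / R_φ(N)) = 0`: any element of the quotient of `N` by
its rational submodule whose annihilator is closed and cofinite must be zero. -/
theorem rational_part_of_quotient_zero
    {K : Type u} [Field K] {C : Type u} [AddCommGroup C] [Module K C] [Coalgebra K C]
    {A : Type u} [Ring A] [Algebra K A]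
    (φ : C ⊗[K] A →ₗ[K] K) (hφ : IsRationalPairing φ)
    (hdense : @Dense A (topA φ) {a : A | RatElem φ A a}) :
    ∀ (N : Type u) (_ : AddCommGroup N) (_ : Module A N) (R : Submodule A N),
      (∀ n : N, n ∈ R ↔ RatElem φ N n) →
      ∀ m : N ⧸ R, RatElem φ (N ⧸ R) m → m = 0 := by
  intro N _ _ R hR m hm
  letI : TopologicalSpace A := topA φ
  obtain ⟨n, rfl⟩ := R.mkQ_surjective m
  obtain ⟨S, hS⟩ := exists_Usub_le φ (ann (N ⧸ R) (R.mkQ n)) hm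
  -- find a rational `a ∈ 1 + U_S`
  have hopen : IsOpen {a : A | ∀ c ∈ S, φ (c ⊗ₜ a) = φ (c ⊗ₜ (1 : A))} := isOpen_agree φ S _
  have hne : {a : A | ∀ c ∈ S, φ (c ⊗ₜ a) = φ (c ⊗ₜ (1 : A))}.Nonempty :=
    ⟨1, fun c _ => rfl⟩
  obtain ⟨a, haRat, haS⟩ := hdense.exists_mem_open hopen hne
  have h1 : a - 1 ∈ Usub φ S := mem_Usub.2 fun c hc => by
    rw [tmul_sub, map_sub, haS c hc, sub_self]
  have h2 : a - 1 ∈ ann (N ⧸ R) (R.mkQ n) := hS _ h1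
  rw [ann, LinearMap.mem_ker, LinearMap.toSpanSingleton_apply] at h2
  have hma : a • R.mkQ n = R.mkQ n := by
    rw [sub_smul, one_smul, sub_eq_zero] at h2
    exact h2
  -- `a • n` is rational
  have hrat : RatElem φ N (a • n) := by
    refine closedCofinite_mono φ haRat ?_
    intro b hb
    rw [ann, LinearMap.mem_ker, LinearMap.toSpanSingleton_apply] at hb ⊢
    rw [smul_eq_mul] at hb
    rw [smul_smul, hb, zero_smul]
  have hmem : a • n ∈ R := (hR _).2 hrat
  have hzero : R.mkQ (a • n) = 0 := (Submodule.Quotient.mk_eq_zero R).2 hmem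
  rw [← hma, ← map_smul, hzero]

end Formal
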